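/- Let n ≥ 1 be an integer and s ≥ s₀ > n/2. There exist constants C(s₀), C(s) > 0 such that for all u, v : ℤⁿ → ℂ with ‖u‖_s < ∞ and ‖v‖_s < ∞, the convolution (u∗v)_i := Σ_{j∈ℤⁿ} u_j v_{i−j} is well defined (the sums converge absolutely) and satisfies the asymmetric tame product estimate ‖u∗v‖_s ≤ C(s₀) ‖u‖_s ‖v‖_{s₀} + C(s) ‖u‖_{s₀} ‖v‖_s. (On the function side, u∗v is the product of the two periodic functions with Fourier coefficients u and v.) -/

import Mathlib

open scoped ENNReal

/-- `|i| := max_k |i_k|` for a multi-index `i ∈ ℤⁿ`. -/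
def absIdx {n : ℕ} (i : Fin n → ℤ) : ℕ :=
  Finset.univ.sup fun k => (i k).natAbs

/-- `⟨i⟩ := max(1, |i|)`. -/
noncomputable def wt {n : ℕ} (i : Fin n → ℤ) : ℝ := max 1 (absIdx i : ℝ)

/-- Sobolev norm `‖u‖_s := (Σ_i ⟨i⟩^{2s} |u_i|²)^{1/2}` (valued in `ℝ≥0∞`). -/
noncomputable def sobNorm {n : ℕ} (u : (Fin n → ℤ) → ℂ) (s : ℝ) : ℝ≥0∞ :=
  (∑' i : Fin n → ℤ, ENNReal.ofReal (wt i ^ (2 * s)) * (‖u i‖₊ : ℝ≥0∞) ^ 2) ^ (1/2 : ℝ)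

open MeasureTheory

/-!
The weight is subadditive up to a factor: `⟨i⟩ ^ s ≤ 2 ^ s (⟨j⟩ ^ s + ⟨i - j⟩ ^ s)`. Splitting
each convolution sum accordingly, `⟨·⟩ ^ s |u ∗ v|` is dominated by
`2 ^ s ((⟨·⟩ ^ s |u|) ∗ |v| + |u| ∗ (⟨·⟩ ^ s |v|))`, and Young's inequality
`‖f ∗ g‖_ℓ² ≤ ‖f‖_ℓ² ‖g‖_ℓ¹` bounds each piece. By Cauchy–Schwarz,
`‖v‖_ℓ¹ ≤ (∑ ⟨i⟩ ^ (-2 s₀)) ^ (1/2) ‖v‖_{s₀}`, a lattice sum that converges because `2 s₀ > n`.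
Working with `[0, ∞]`-valued sequences throughout, the absolute convergence of the convolution
sums is read off the final estimate.
-/

section LTwo
variable {ι : Type*}

noncomputable def l2Norm (f : ι → ℝ≥0∞) : ℝ≥0∞ := (∑' i, f i ^ (2:ℝ)) ^ (1/2:ℝ)

theorem l2Norm_rpow_two (f : ι → ℝ≥0∞) : l2Norm f ^ (2:ℝ) = ∑' i, f i ^ (2:ℝ) := by
  rw [l2Norm, one_div, ENNReal.rpow_inv_rpow two_ne_zero]

theorem tsum_mul_le_l2Norm_mul (f g : ι → ℝ≥0∞) : ∑' i, f i * g i ≤ l2Norm f * l2Norm g := by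
  let _ : MeasurableSpace ι := ⊤
  have _ : MeasurableSingletonClass ι := ⟨fun _ => trivial⟩
  simpa [lintegral_count, l2Norm] using ENNReal.lintegral_mul_le_Lp_mul_Lq
    (Measure.count : Measure ι) Real.HolderConjugate.two_two measurable_from_top.aemeasurable
    measurable_from_top.aemeasurable

theorem l2Norm_add_le (f g : ι → ℝ≥0∞) : l2Norm (f + g) ≤ l2Norm f + l2Norm g := by
  let _ : MeasurableSpace ι := ⊤
  have _ : MeasurableSingletonClass ι := ⟨fun _ => trivial⟩
  simpa [lintegral_count, l2Norm] using ENNReal.lintegral_Lp_add_le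
    (μ := (Measure.count : Measure ι)) measurable_from_top.aemeasurable
    measurable_from_top.aemeasurable one_le_two

theorem l2Norm_mono {f g : ι → ℝ≥0∞} (h : f ≤ g) : l2Norm f ≤ l2Norm g := by
  unfold l2Norm
  gcongr
  exact h _

theorem l2Norm_const_mul (c : ℝ≥0∞) (f : ι → ℝ≥0∞) :
    l2Norm (fun i => c * f i) = c * l2Norm f := by
  simp only [l2Norm, ENNReal.mul_rpow_of_nonneg _ _ zero_le_two, ENNReal.tsum_mul_left]
  rw [ENNReal.mul_rpow_of_nonneg _ _ one_half_pos.le, one_div, ENNReal.rpow_rpow_inv two_ne_zero]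

theorem le_l2Norm (f : ι → ℝ≥0∞) (i : ι) : f i ≤ l2Norm f := by
  rw [← ENNReal.rpow_le_rpow_iff two_pos, l2Norm_rpow_two]
  exact ENNReal.le_tsum i

theorem tsum_le_l2Norm_mul_l2Norm {g w : ι → ℝ≥0∞} (hgw : ∀ i, 1 ≤ g i * w i)
    (f : ι → ℝ≥0∞) : ∑' i, f i ≤ l2Norm g * l2Norm (w * f) :=
  calc ∑' i, f i ≤ ∑' i, g i * (w i * f i) := by
        gcongr with i
        rw [← mul_assoc]
        exact le_mul_of_one_le_left' (hgw i)
    _ ≤ _ := tsum_mul_le_l2Norm_mul _ _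

end LTwo

section Convolution
variable {ι : Type*} [AddCommGroup ι]

noncomputable def ennConv (a b : ι → ℝ≥0∞) (i : ι) : ℝ≥0∞ := ∑' j, a j * b (i - j)

theorem tsum_comp_sub_left (f : ι → ℝ≥0∞) (i : ι) : ∑' j, f (i - j) = ∑' j, f j :=
  (Equiv.subLeft i).tsum_eq f

theorem tsum_comp_sub_right (f : ι → ℝ≥0∞) (j : ι) : ∑' i, f (i - j) = ∑' i, f i :=
  (Equiv.subRight j).tsum_eq f

theorem ennConv_comm (a b : ι → ℝ≥0∞) : ennConv a b = ennConv b a := by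
  ext i
  rw [ennConv, ← (Equiv.subLeft i).tsum_eq]
  simp [ennConv, mul_comm]

theorem ennConv_rpow_two_le (a b : ι → ℝ≥0∞) (i : ι) :
    ennConv a b i ^ (2:ℝ) ≤ (∑' j, a j ^ (2:ℝ) * b (i - j)) * ∑' j, b j := by
  have hsplit : ∀ j, a j * b (i - j) =
      a j * b (i - j) ^ (1/2:ℝ) * b (i - j) ^ (1/2:ℝ) := fun j => by
    rw [mul_assoc, ← ENNReal.rpow_add_of_nonneg _ _ one_half_pos.le one_half_pos.le]
    norm_num
  have hcs := tsum_mul_le_l2Norm_mul (fun j => a j * b (i - j) ^ (1/2:ℝ))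
    (fun j => b (i - j) ^ (1/2:ℝ))
  simp only [← hsplit] at hcs
  calc ennConv a b i ^ (2:ℝ) ≤ _ := ENNReal.rpow_le_rpow hcs zero_le_two
    _ = (∑' j, a j ^ (2:ℝ) * b (i - j)) * ∑' j, b (i - j) := by
      simp only [ENNReal.mul_rpow_of_nonneg _ _ zero_le_two, l2Norm_rpow_two, ← ENNReal.rpow_mul]
      norm_num
    _ = _ := by rw [tsum_comp_sub_left]

theorem l2Norm_ennConv_le (a b : ι → ℝ≥0∞) : l2Norm (ennConv a b) ≤ l2Norm a * ∑' i, b i := by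
  have hsq : ∑' i, ennConv a b i ^ (2:ℝ) ≤ (∑' i, a i ^ (2:ℝ)) * (∑' i, b i) ^ (2:ℝ) :=
    calc ∑' i, ennConv a b i ^ (2:ℝ)
        ≤ ∑' i, (∑' j, a j ^ (2:ℝ) * b (i - j)) * ∑' j, b j :=
          ENNReal.tsum_le_tsum (ennConv_rpow_two_le a b)
      _ = (∑' j, a j ^ (2:ℝ) * ∑' i, b (i - j)) * ∑' j, b j := by
          rw [ENNReal.tsum_mul_right, ENNReal.tsum_comm]
          simp only [ENNReal.tsum_mul_left]
      _ = (∑' i, a i ^ (2:ℝ)) * (∑' i, b i) ^ (2:ℝ) := by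
          simp only [tsum_comp_sub_right, ENNReal.tsum_mul_right, ENNReal.rpow_two]
          ring
  rw [← ENNReal.rpow_le_rpow_iff two_pos, l2Norm_rpow_two,
    ENNReal.mul_rpow_of_nonneg _ _ zero_le_two, l2Norm_rpow_two]
  exact hsq

theorem enorm_tsum_mul_le_ennConv {R : Type*} [NormedRing R] [NormMulClass R] (u v : ι → R)
    (i : ι) : ‖∑' j, u j * v (i - j)‖ₑ ≤ ennConv (fun i => ‖u i‖ₑ) (fun i => ‖v i‖ₑ) i := by
  simpa only [ennConv, enorm_mul] using enorm_tsum_le_tsum_enorm (f := fun j => u j * v (i - j))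

theorem mul_ennConv_le {w : ι → ℝ≥0∞} {c : ℝ≥0∞} (hw : ∀ i j, w i ≤ c * (w j + w (i - j)))
    (a b : ι → ℝ≥0∞) (i : ι) :
    w i * ennConv a b i ≤ c * (ennConv (w * a) b i + ennConv (w * b) a i) :=
  calc w i * ennConv a b i = ∑' j, w i * (a j * b (i - j)) := ENNReal.tsum_mul_left.symm
    _ ≤ ∑' j, c * (w j + w (i - j)) * (a j * b (i - j)) := by gcongr with j; exact hw i j
    _ = c * (ennConv (w * a) b i + ennConv a (w * b) i) := by
        rw [ennConv, ennConv, ← ENNReal.tsum_add, ← ENNReal.tsum_mul_left]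
        congr with j
        simp only [Pi.mul_apply]
        ring
    _ = _ := by rw [ennConv_comm a]

theorem l2Norm_mul_ennConv_le {w w₀ g : ι → ℝ≥0∞} {c : ℝ≥0∞}
    (hw : ∀ i j, w i ≤ c * (w j + w (i - j))) (hg : ∀ i, 1 ≤ g i * w₀ i) (a b : ι → ℝ≥0∞) :
    l2Norm (w * ennConv a b) ≤
      c * l2Norm g * (l2Norm (w * a) * l2Norm (w₀ * b) + l2Norm (w₀ * a) * l2Norm (w * b)) :=
  calc l2Norm (w * ennConv a b)
      ≤ l2Norm fun i => c * (ennConv (w * a) b + ennConv (w * b) a) i :=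
        l2Norm_mono (mul_ennConv_le hw a b)
    _ = c * l2Norm (ennConv (w * a) b + ennConv (w * b) a) := l2Norm_const_mul _ _
    _ ≤ c * (l2Norm (w * a) * ∑' i, b i + l2Norm (w * b) * ∑' i, a i) := by
        gcongr
        exact (l2Norm_add_le _ _).trans
          (add_le_add (l2Norm_ennConv_le _ _) (l2Norm_ennConv_le _ _))
    _ ≤ c * (l2Norm (w * a) * (l2Norm g * l2Norm (w₀ * b)) +
          l2Norm (w * b) * (l2Norm g * l2Norm (w₀ * a))) := by
        gcongr <;> exact tsum_le_l2Norm_mul_l2Norm hg _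
    _ = _ := by ring

end Convolution

section Weight
variable {n : ℕ}

theorem one_le_wt (i : Fin n → ℤ) : 1 ≤ wt i := le_max_left _ _

theorem wt_pos (i : Fin n → ℤ) : 0 < wt i := one_pos.trans_le (one_le_wt i)

theorem natAbs_le_absIdx (i : Fin n → ℤ) (k : Fin n) : (i k).natAbs ≤ absIdx i :=
  Finset.le_sup (f := fun k => (i k).natAbs) (Finset.mem_univ k)

theorem absIdx_add_le (x y : Fin n → ℤ) : absIdx (x + y) ≤ absIdx x + absIdx y :=
  Finset.sup_le fun k _ => (Int.natAbs_add_le _ _).trans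
    (add_le_add (natAbs_le_absIdx x k) (natAbs_le_absIdx y k))

theorem wt_add_le (x y : Fin n → ℤ) : wt (x + y) ≤ wt x + wt y := by
  refine max_le (by linarith [one_le_wt x, one_le_wt y]) ?_
  calc (absIdx (x + y) : ℝ) ≤ absIdx x + absIdx y := by exact_mod_cast absIdx_add_le x y
    _ ≤ wt x + wt y := add_le_add (le_max_right _ _) (le_max_right _ _)

theorem wt_add_rpow_le {t : ℝ} (ht : 0 ≤ t) (x y : Fin n → ℤ) :
    wt (x + y) ^ t ≤ 2 ^ t * (wt x ^ t + wt y ^ t) :=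
  calc wt (x + y) ^ t ≤ (2 * max (wt x) (wt y)) ^ t := by
        gcongr
        · exact (wt_pos _).le
        · linarith [wt_add_le x y, le_max_left (wt x) (wt y), le_max_right (wt x) (wt y)]
    _ = 2 ^ t * max (wt x ^ t) (wt y ^ t) := by
        rw [Real.mul_rpow zero_le_two ((wt_pos x).le.trans (le_max_left _ _)),
          Real.rpow_max (wt_pos x).le (wt_pos y).le ht]
    _ ≤ 2 ^ t * (wt x ^ t + wt y ^ t) := by
        gcongr
        exact max_le_add_of_nonneg (Real.rpow_nonneg (wt_pos x).le t)
          (Real.rpow_nonneg (wt_pos y).le t)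

theorem summable_wt_rpow_neg {p : ℝ} (hp : (n : ℝ) < p) :
    Summable fun i : Fin n → ℤ => wt i ^ (-p) := by
  let L := Submodule.span ℤ (Set.range (Pi.basisFun ℝ (Fin n)))
  have hrank : Module.finrank ℤ L = n := by rw [ZLattice.rank ℝ]; simp
  let toL : (Fin n → ℤ) → L := fun i =>
    ⟨fun k => i k, ((Pi.basisFun ℝ (Fin n)).mem_span_iff_repr_mem ℤ _).2 fun k => ⟨i k, by simp⟩⟩
  have htoL : Function.Injective toL := fun i j h => funext fun k => by
    simpa [toL] using congr_fun (congr_arg Subtype.val h) k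
  have hL := (ZLattice.summable_norm_rpow L (-p) (by rw [hrank]; linarith)).comp_injective htoL
  refine hL.of_norm_bounded_eventually ?_
  filter_upwards [Filter.eventually_cofinite_ne 0] with i hi
  have hnorm : ‖toL i‖ ≤ wt i := by
    refine ((pi_norm_le_iff_of_nonneg (by positivity)).2 fun k => ?_).trans (le_max_right _ _)
    change |((i k : ℤ) : ℝ)| ≤ absIdx i
    rw [← Int.cast_abs, ← Nat.cast_natAbs]
    exact_mod_cast natAbs_le_absIdx i k
  have hpos : 0 < ‖toL i‖ := norm_pos_iff.2 fun h0 => hi (htoL (h0.trans (by ext; simp [toL])))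
  rw [Real.norm_of_nonneg (Real.rpow_nonneg (wt_pos i).le _)]
  exact Real.rpow_le_rpow_of_nonpos hpos hnorm (by linarith [(n.cast_nonneg : (0:ℝ) ≤ n)])

noncomputable def sobWeight (t : ℝ) (i : Fin n → ℤ) : ℝ≥0∞ := ENNReal.ofReal (wt i ^ t)

theorem sobNorm_eq_l2Norm (u : (Fin n → ℤ) → ℂ) (t : ℝ) :
    sobNorm u t = l2Norm (sobWeight t * fun i => ‖u i‖ₑ) := by
  unfold sobNorm l2Norm
  congr 1
  refine tsum_congr fun i => ?_
  rw [Pi.mul_apply, ENNReal.mul_rpow_of_nonneg _ _ zero_le_two, sobWeight,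
    ENNReal.ofReal_rpow_of_pos (Real.rpow_pos_of_pos (wt_pos i) t), ← Real.rpow_mul (wt_pos i).le,
    mul_comm t, ENNReal.rpow_two, enorm_eq_nnnorm]

theorem one_le_sobWeight {t : ℝ} (ht : 0 ≤ t) (i : Fin n → ℤ) : 1 ≤ sobWeight t i :=
  ENNReal.one_le_ofReal.2 (Real.one_le_rpow (one_le_wt i) ht)

theorem sobWeight_mono {t₀ t : ℝ} (h : t₀ ≤ t) :
    (sobWeight t₀ : (Fin n → ℤ) → ℝ≥0∞) ≤ sobWeight t :=
  fun i => ENNReal.ofReal_le_ofReal (Real.rpow_le_rpow_of_exponent_le (one_le_wt i) h)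

theorem sobWeight_neg_mul_sobWeight (t : ℝ) (i : Fin n → ℤ) :
    sobWeight (-t) i * sobWeight t i = 1 := by
  rw [sobWeight, sobWeight, ← ENNReal.ofReal_mul (Real.rpow_nonneg (wt_pos i).le _),
    ← Real.rpow_add (wt_pos i), neg_add_cancel, Real.rpow_zero, ENNReal.ofReal_one]

theorem sobWeight_le_add {t : ℝ} (ht : 0 ≤ t) (i j : Fin n → ℤ) :
    sobWeight t i ≤ 2 ^ t * (sobWeight t j + sobWeight t (i - j)) := by
  have h := wt_add_rpow_le ht j (i - j)
  rw [add_sub_cancel] at h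
  calc sobWeight t i ≤ ENNReal.ofReal (2 ^ t * (wt j ^ t + wt (i - j) ^ t)) :=
        ENNReal.ofReal_le_ofReal h
    _ = _ := by
        rw [ENNReal.ofReal_mul (by positivity),
          ENNReal.ofReal_add (Real.rpow_nonneg (wt_pos _).le _) (Real.rpow_nonneg (wt_pos _).le _),
          ← ENNReal.ofReal_rpow_of_pos two_pos, ENNReal.ofReal_ofNat]
        rfl

theorem l2Norm_sobWeight_neg_lt_top {t : ℝ} (ht : (n : ℝ) / 2 < t) :
    l2Norm (sobWeight (-t) : (Fin n → ℤ) → ℝ≥0∞) < ⊤ := by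
  have hsum := summable_wt_rpow_neg (n := n) (p := 2 * t) (by linarith)
  have hterm : ∀ i : Fin n → ℤ,
      sobWeight (-t) i ^ (2:ℝ) = ENNReal.ofReal (wt i ^ (-(2 * t))) := by
    intro i
    rw [sobWeight, ENNReal.ofReal_rpow_of_pos (Real.rpow_pos_of_pos (wt_pos i) _),
      ← Real.rpow_mul (wt_pos i).le]
    ring_nf
  rw [l2Norm, tsum_congr hterm,
    ← ENNReal.ofReal_tsum_of_nonneg (fun i => Real.rpow_nonneg (wt_pos i).le _) hsum]
  exact ENNReal.rpow_lt_top_of_nonneg one_half_pos.le ENNReal.ofReal_ne_top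

theorem sobNorm_mono (u : (Fin n → ℤ) → ℂ) {t₀ t : ℝ} (h : t₀ ≤ t) :
    sobNorm u t₀ ≤ sobNorm u t := by
  rw [sobNorm_eq_l2Norm, sobNorm_eq_l2Norm]
  exact l2Norm_mono fun i => mul_le_mul_left (sobWeight_mono h i) _

theorem l2Norm_sobWeight_mul_ennConv_le {s : ℝ} (hs : 0 ≤ s) (s₀ : ℝ) (u v : (Fin n → ℤ) → ℂ) :
    l2Norm (sobWeight s * ennConv (fun i => ‖u i‖ₑ) (fun i => ‖v i‖ₑ)) ≤
      2 ^ s * l2Norm (sobWeight (-s₀) : (Fin n → ℤ) → ℝ≥0∞) *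
        (sobNorm u s * sobNorm v s₀ + sobNorm u s₀ * sobNorm v s) := by
  rw [sobNorm_eq_l2Norm u s, sobNorm_eq_l2Norm u s₀, sobNorm_eq_l2Norm v s,
    sobNorm_eq_l2Norm v s₀]
  exact l2Norm_mul_ennConv_le (sobWeight_le_add hs)
    (fun i => (sobWeight_neg_mul_sobWeight s₀ i).ge) _ _

end Weight

theorem stmt3_general (n : ℕ) (s₀ s : ℝ) (hs₀ : (n : ℝ) / 2 < s₀) (hs : s₀ ≤ s) :
    ∃ C₀ C : ℝ, 0 < C₀ ∧ 0 < C ∧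
      ∀ u v : (Fin n → ℤ) → ℂ, sobNorm u s < ⊤ → sobNorm v s < ⊤ →
        (∀ i : Fin n → ℤ, Summable fun j : Fin n → ℤ => ‖u j * v (i - j)‖) ∧
        sobNorm (fun i => ∑' j : Fin n → ℤ, u j * v (i - j)) s ≤
          ENNReal.ofReal C₀ * sobNorm u s * sobNorm v s₀ +
            ENNReal.ofReal C * sobNorm u s₀ * sobNorm v s := by
  have hs_nonneg : 0 ≤ s := by linarith [(n.cast_nonneg : (0:ℝ) ≤ n)]
  set c : ℝ≥0∞ := 2 ^ s * l2Norm (sobWeight (-s₀) : (Fin n → ℤ) → ℝ≥0∞)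
  have hc_top : c ≠ ⊤ := ENNReal.mul_ne_top (by simp) (l2Norm_sobWeight_neg_lt_top hs₀).ne
  have hc_zero : c ≠ 0 := mul_ne_zero (by simp) ((ENNReal.ofReal_pos.2
    (Real.rpow_pos_of_pos (wt_pos 0) _)).trans_le (le_l2Norm _ 0)).ne'
  have hc_pos := ENNReal.toReal_pos hc_zero hc_top
  refine ⟨c.toReal, c.toReal, hc_pos, hc_pos, fun u v hu hv => ?_⟩
  rw [ENNReal.ofReal_toReal hc_top]
  have htame := l2Norm_sobWeight_mul_ennConv_le hs_nonneg s₀ u v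
  have hrhs : c * (sobNorm u s * sobNorm v s₀ + sobNorm u s₀ * sobNorm v s) ≠ ⊤ := by
    have := (sobNorm_mono u hs).trans_lt hu
    have := (sobNorm_mono v hs).trans_lt hv
    finiteness
  have hfinite : ∀ i, ennConv (fun i => ‖u i‖ₑ) (fun i => ‖v i‖ₑ) i ≠ ⊤ := fun i =>
    ne_top_of_le_ne_top hrhs <| (le_mul_of_one_le_left' (one_le_sobWeight hs_nonneg i)).trans <|
      (le_l2Norm _ i).trans htame
  refine ⟨fun i => tsum_enorm_ne_top_iff_summable_norm.1 ?_, ?_⟩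
  · simpa [ennConv, enorm_mul] using hfinite i
  calc sobNorm (fun i => ∑' j : Fin n → ℤ, u j * v (i - j)) s
      ≤ l2Norm (sobWeight s * ennConv (fun i => ‖u i‖ₑ) (fun i => ‖v i‖ₑ)) := by
        rw [sobNorm_eq_l2Norm]
        exact l2Norm_mono fun i => mul_le_mul_right (enorm_tsum_mul_le_ennConv u v i) _
    _ ≤ c * (sobNorm u s * sobNorm v s₀ + sobNorm u s₀ * sobNorm v s) := htame
    _ = _ := by ring

theorem stmt3 (n : ℕ) (hn : 1 ≤ n) (s₀ s : ℝ) (hs₀ : (n : ℝ) / 2 < s₀) (hs : s₀ ≤ s) :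
    ∃ C₀ C : ℝ, 0 < C₀ ∧ 0 < C ∧
      ∀ u v : (Fin n → ℤ) → ℂ, sobNorm u s < ⊤ → sobNorm v s < ⊤ →
        (∀ i : Fin n → ℤ, Summable fun j : Fin n → ℤ => ‖u j * v (i - j)‖) ∧
        sobNorm (fun i => ∑' j : Fin n → ℤ, u j * v (i - j)) s ≤
          ENNReal.ofReal C₀ * sobNorm u s * sobNorm v s₀ +
            ENNReal.ofReal C * sobNorm u s₀ * sobNorm v s :=
  stmt3_general n s₀ s hs₀ hs
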